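/- In the channel dependency graph of south-last routing on the alternating-direction grid, there exists a strict order on directed links such that every allowed turn (dependency) goes from a smaller link to a larger link; hence the channel dependency graph is acyclic and the routing is deadlock-free by Dally–Seitz. -/
import Mathlib


/-- The four cardinal unit moves on ℤ × ℤ. -/
inductive Dir
  | N | S | E | W
deriving DecidableEq

/-- Unit displacement vector of a move. -/
def Dir.vec : Dir → ℤ × ℤ
  | .N => (0, 1)
  | .S => (0, -1)
  | .E => (1, 0)
  | .W => (-1, 0)

/-- A directed link: a node together with an outgoing direction. -/
abbrev Link := (ℤ × ℤ) × Dir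

/-- The n×n grid of nodes. -/
def grid (n : ℤ) : Set (ℤ × ℤ) :=
  {p | 0 ≤ p.1 ∧ p.1 ≤ n - 1 ∧ 0 ≤ p.2 ∧ p.2 ≤ n - 1}

/-- Alternating unidirectional links: East only on even rows, West only on odd
    rows, North only on even columns, South only on odd columns. -/
def AllowedDir (p : ℤ × ℤ) : Dir → Prop
  | .E => Even p.2
  | .W => Odd p.2
  | .N => Even p.1
  | .S => Odd p.1

/-- The directed links of the n×n alternating-direction grid. -/
def GridLinks (n : ℤ) : Set Link :=
  {l | l.1 ∈ grid n ∧ l.1 + l.2.vec ∈ grid n ∧ AllowedDir l.1 l.2}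

/-- The link-to-link turns permitted by south-last routing:
    N→N, N→E, N→W, E→E, E→N, W→W, W→N, N→S, S→S
    (forbidden: E→S, W→S, and all 180° reversals). -/
def AllowedTurn : Dir → Dir → Prop := fun a b =>
  (a, b) ∈ ([(Dir.N, Dir.N), (Dir.N, Dir.E), (Dir.N, Dir.W),
    (Dir.E, Dir.E), (Dir.E, Dir.N), (Dir.W, Dir.W), (Dir.W, Dir.N),
    (Dir.N, Dir.S), (Dir.S, Dir.S)] : List (Dir × Dir))

/-- The channel dependency relation of south-last routing: link l2 can be used
    immediately after link l1. -/
def AllowedDep (n : ℤ) (l1 l2 : Link) : Prop :=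
  l1 ∈ GridLinks n ∧ l2 ∈ GridLinks n ∧ l2.1 = l1.1 + l1.2.vec ∧
    AllowedTurn l1.2 l2.2

/-- Integer rank of a link under south-last routing. -/
def slRank (n : ℤ) : Link → ℤ
  | ((x, y), Dir.E) => n * (2 * y) + x
  | ((x, y), Dir.W) => n * (2 * y) + (n - 1 - x)
  | ((x, y), Dir.N) => n * (2 * y + 1) + x
  | ((x, y), Dir.S) => 2 * n * n + (n * (n - 1 - y) + x)

lemma div_unique {n q q' r r' : ℤ} (hr : 0 ≤ r) (hrn : r < n)
    (hr' : 0 ≤ r') (hrn' : r' < n) (h : n * q + r = n * q' + r') :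
    q = q' ∧ r = r' := by
  have hn : 0 < n := lt_of_le_of_lt hr hrn
  have hq : q = q' := by
    by_contra hne
    have h2 : n * (q - q') = r' - r := by ring_nf; linarith
    rcases lt_or_gt_of_ne hne with h3 | h3
    · have : q - q' ≤ -1 := by omega
      nlinarith
    · have : 1 ≤ q - q' := by omega
      nlinarith
  exact ⟨hq, by rw [hq] at h; linarith⟩

lemma rank_mono {n : ℤ} {l1 l2 : Link} (h : AllowedDep n l1 l2) :
    slRank n l1 < slRank n l2 := by
  obtain ⟨h1, h2, hpos, hturn⟩ := h
  obtain ⟨⟨x, y⟩, d⟩ := l1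
  obtain ⟨⟨x', y'⟩, d'⟩ := l2
  obtain ⟨⟨hx0, hx1, hy0, hy1⟩, hv1, ha1⟩ := h1
  obtain ⟨⟨hx0', hx1', hy0', hy1'⟩, hv2, ha2⟩ := h2
  dsimp only at hx0 hx1 hy0 hy1 hx0' hx1' hy0' hy1' ha1 ha2 hpos
  have hn : 0 < n := by linarith
  simp only [AllowedTurn, List.mem_cons, List.mem_singleton, Prod.mk.injEq,
    List.not_mem_nil, or_false] at hturn
  rcases hturn with ⟨rfl, rfl⟩ | ⟨rfl, rfl⟩ | ⟨rfl, rfl⟩ | ⟨rfl, rfl⟩ |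
    ⟨rfl, rfl⟩ | ⟨rfl, rfl⟩ | ⟨rfl, rfl⟩ | ⟨rfl, rfl⟩ | ⟨rfl, rfl⟩ <;>
    simp only [Dir.vec, Prod.mk_add_mk, Prod.mk.injEq] at hpos <;>
    obtain ⟨hpx, hpy⟩ := hpos <;> subst hpx <;> subst hpy <;>
    simp only [slRank] <;> nlinarith

lemma rank_nonneg {n : ℤ} {l : Link} (h : l ∈ GridLinks n) : 0 ≤ slRank n l := by
  obtain ⟨⟨x, y⟩, d⟩ := l
  obtain ⟨⟨hx0, hx1, hy0, hy1⟩, hv, ha⟩ := h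
  dsimp only at hx0 hx1 hy0 hy1
  have hn : 0 < n := by linarith
  cases d <;> simp only [slRank] <;> nlinarith

lemma rank_inj {n : ℤ} {l1 l2 : Link} (h1 : l1 ∈ GridLinks n)
    (h2 : l2 ∈ GridLinks n) (h : slRank n l1 = slRank n l2) : l1 = l2 := by
  obtain ⟨⟨x, y⟩, d⟩ := l1
  obtain ⟨⟨x', y'⟩, d'⟩ := l2
  obtain ⟨⟨hx0, hx1, hy0, hy1⟩, hv1, ha1⟩ := h1
  obtain ⟨⟨hx0', hx1', hy0', hy1'⟩, hv2, ha2⟩ := h2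
  dsimp only at hx0 hx1 hy0 hy1 hx0' hx1' hy0' hy1' ha1 ha2
  have hn : 0 < n := by linarith
  cases d <;> cases d' <;> simp only [slRank] at h <;>
    dsimp only [AllowedDir] at ha1 ha2
  -- N N
  · have := div_unique hx0 (by omega) hx0' (by omega) h
    simp only [Prod.mk.injEq, eq_self_iff_true, and_true]
    omega
  -- N S
  · nlinarith
  -- N E
  · have := div_unique hx0' (by omega) hx0 (by omega) h.symm
    omega
  -- N W
  · have := div_unique (show (0:ℤ) ≤ n - 1 - x' by omega) (by omega) hx0
      (by omega) h.symm
    omega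
  -- S N
  · nlinarith
  -- S S
  · have h' : n * (n - 1 - y) + x = n * (n - 1 - y') + x' := by linarith
    have := div_unique hx0 (by omega) hx0' (by omega) h'
    simp only [Prod.mk.injEq, eq_self_iff_true, and_true]
    omega
  -- S E
  · nlinarith
  -- S W
  · nlinarith
  -- E N
  · have := div_unique hx0 (by omega) hx0' (by omega) h
    omega
  -- E S
  · nlinarith
  -- E E
  · have := div_unique hx0 (by omega) hx0' (by omega) h
    simp only [Prod.mk.injEq, eq_self_iff_true, and_true]
    omega
  -- E W : parity contradiction
  · have := div_unique hx0 (by omega) (show (0:ℤ) ≤ n - 1 - x' by omega)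
      (by omega) h
    have hy : y = y' := by omega
    rw [hy] at ha1
    exact absurd ha2 (Int.not_odd_iff_even.mpr ha1)
  -- W N
  · have := div_unique (show (0:ℤ) ≤ n - 1 - x by omega) (by omega) hx0'
      (by omega) h
    omega
  -- W S
  · nlinarith
  -- W E : parity contradiction
  · have := div_unique (show (0:ℤ) ≤ n - 1 - x by omega) (by omega) hx0'
      (by omega) h
    have hy : y = y' := by omega
    rw [hy] at ha1
    exact absurd ha1 (Int.not_odd_iff_even.mpr ha2)
  -- W W
  · have := div_unique (show (0:ℤ) ≤ n - 1 - x by omega) (by omega)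
      (show (0:ℤ) ≤ n - 1 - x' by omega) (by omega) h
    simp only [Prod.mk.injEq, eq_self_iff_true, and_true]
    omega

/-- Dally–Seitz argument for south-last routing on the alternating-direction
    grid: there exists a rank function on directed links, injective on the
    grid's links, that strictly increases along every allowed channel
    dependency; hence the channel dependency graph is acyclic and south-last
    routing is deadlock-free. -/
theorem south_last_cdg_acyclic (n : ℤ) :
    (∃ rank : Link → ℕ, Set.InjOn rank (GridLinks n) ∧
      ∀ l1 l2 : Link, AllowedDep n l1 l2 → rank l1 < rank l2) ∧
    ∀ l : Link, ¬ Relation.TransGen (AllowedDep n) l l := by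
  have key : ∀ l1 l2 : Link, AllowedDep n l1 l2 →
      (slRank n l1).toNat < (slRank n l2).toNat := by
    intro l1 l2 h
    have hlt := rank_mono h
    have h0 := rank_nonneg h.1
    omega
  constructor
  · refine ⟨fun l => (slRank n l).toNat, ?_, key⟩
    intro l1 h1 l2 h2 h
    have h' : (slRank n l1).toNat = (slRank n l2).toNat := h
    have n1 := rank_nonneg h1
    have n2 := rank_nonneg h2
    exact rank_inj h1 h2 (by clear h; omega)
  · intro l hl
    have : ∀ a b : Link, Relation.TransGen (AllowedDep n) a b →
        (slRank n a).toNat < (slRank n b).toNat := by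
      intro a b h
      induction h with
      | single h => exact key _ _ h
      | tail _ h ih => exact ih.trans (key _ _ h)
    exact absurd (this l l hl) (lt_irrefl _)
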